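/- Let |q| < 1 and |a|, |c| < 1, and let H_n(x;c|q) be the continuous big q-Hermite polynomials with generating function ∑_{n=0}^∞ H_n(x;c|q) t^n/(q;q)_n = (ct;q)_∞ / ((te^{iθ}, te^{-iθ};q)_∞), x = cos θ. Then the linear map (T_{a,c} f)(x) = ((ae^{iθ}, ae^{-iθ};q)_∞ / (ac;q)_∞) ∑_{n=0}^∞ f(q^n) a^n H_n(x;c|q)/(q;q)_n satisfies T_{a,c} x^k = (ae^{iθ}, ae^{-iθ};q)_k / (ac;q)_k for all k ≥ 0. -/

import Mathlib

open Complex Finset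

noncomputable section

/-- finite q-Pochhammer symbol (z;q)_k -/
def qPoch (z q : ℂ) (k : ℕ) : ℂ := ∏ j ∈ Finset.range k, (1 - z * q ^ j)

/-- infinite q-Pochhammer symbol (z;q)_∞ -/
def qPochInf (z q : ℂ) : ℂ := ∏' j : ℕ, (1 - z * q ^ j)

lemma norm_term_le (z q : ℂ) (hq : ‖q‖ < 1) (j : ℕ) : ‖z * q ^ j‖ ≤ ‖z‖ := by
  rw [norm_mul, norm_pow]
  calc ‖z‖ * ‖q‖ ^ j ≤ ‖z‖ * 1 := by
        gcongr
        exact pow_le_one₀ (norm_nonneg q) hq.le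
    _ = ‖z‖ := mul_one _

lemma one_sub_ne (z q : ℂ) (hz : ‖z‖ < 1) (hq : ‖q‖ < 1) (j : ℕ) : 1 - z * q ^ j ≠ 0 := by
  intro h
  have h1 : z * q ^ j = 1 := by linear_combination -h
  have := norm_term_le z q hq j
  rw [h1, norm_one] at this
  linarith

lemma summable_log (z q : ℂ) (hz : ‖z‖ < 1) (hq : ‖q‖ < 1) :
    Summable fun j : ℕ => Complex.log (1 - z * q ^ j) := by
  set C : ℝ := ‖z‖ / (2 * (1 - ‖z‖)) + 1 with hC
  have hCz : 0 < 1 - ‖z‖ := by linarith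
  apply Summable.of_norm_bounded (g := fun j => C * (‖z‖ * ‖q‖ ^ j))
  · exact ((summable_geometric_of_lt_one (norm_nonneg q) hq).mul_left _).mul_left C
  · intro j
    have hw : ‖-(z * q ^ j)‖ ≤ ‖z‖ := by rw [norm_neg]; exact norm_term_le z q hq j
    have hw1 : ‖-(z * q ^ j)‖ < 1 := lt_of_le_of_lt hw hz
    have hb := Complex.norm_log_one_add_le hw1
    have heq : (1 : ℂ) + -(z * q ^ j) = 1 - z * q ^ j := by ring
    rw [heq] at hb
    have hwe : ‖-(z * q ^ j)‖ = ‖z‖ * ‖q‖ ^ j := by rw [norm_neg, norm_mul, norm_pow]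
    set w := ‖-(z * q ^ j)‖ with hwdef
    have hw0 : 0 ≤ w := norm_nonneg _
    have hbeq : w ^ 2 * (1 - w)⁻¹ / 2 = w ^ 2 / (2 * (1 - w)) := by
      rw [mul_comm (2 : ℝ) (1 - w), ← div_div, div_eq_mul_inv (w ^ 2)]
    rw [hbeq] at hb
    have key : w ^ 2 / (2 * (1 - w)) + w ≤ C * w := by
      have h1 : w ^ 2 / (2 * (1 - w)) ≤ ‖z‖ * w / (2 * (1 - ‖z‖)) := by
        apply div_le_div₀ (by positivity) (by nlinarith) (by linarith) (by linarith)
      rw [hC]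
      calc w ^ 2 / (2 * (1 - w)) + w ≤ ‖z‖ * w / (2 * (1 - ‖z‖)) + w := by linarith
        _ = (‖z‖ / (2 * (1 - ‖z‖)) + 1) * w := by ring
    calc ‖Complex.log (1 - z * q ^ j)‖ ≤ w ^ 2 / (2 * (1 - w)) + w := hb
      _ ≤ C * w := key
      _ = C * (‖z‖ * ‖q‖ ^ j) := by rw [hwe]

lemma multipliable_poch (z q : ℂ) (hz : ‖z‖ < 1) (hq : ‖q‖ < 1) :
    Multipliable fun j : ℕ => 1 - z * q ^ j :=
  Complex.multipliable_of_summable_log (summable_log z q hz hq)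

lemma qPochInf_ne_zero (z q : ℂ) (hz : ‖z‖ < 1) (hq : ‖q‖ < 1) : qPochInf z q ≠ 0 := by
  have hs := (summable_log z q hz hq).hasSum.cexp
  have hp : HasProd (fun j : ℕ => 1 - z * q ^ j)
      (Complex.exp (∑' j : ℕ, Complex.log (1 - z * q ^ j))) := by
    exact HasProd.congr_fun hs fun j => (Complex.exp_log (one_sub_ne z q hz hq j)).symm
  rw [qPochInf, hp.tprod_eq]
  exact Complex.exp_ne_zero _

set_option maxHeartbeats 1000000 in
lemma qPochInf_split (z q : ℂ) (hz : ‖z‖ < 1) (hq : ‖q‖ < 1) (k : ℕ) :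
    qPochInf z q = qPoch z q k * qPochInf (z * q ^ k) q := by
  have hzk : ‖z * q ^ k‖ < 1 := lt_of_le_of_lt (norm_term_le z q hq k) hz
  have hm : Multipliable fun j : ℕ => 1 - z * q ^ (j + k) := by
    apply (multipliable_poch (z * q ^ k) q hzk hq).congr
    intro j
    rw [pow_add]; ring
  have h2 : (∏' j : ℕ, (1 - z * q ^ (j + k))) = qPochInf (z * q ^ k) q := by
    rw [qPochInf]
    exact tprod_congr fun j => by rw [pow_add]; ring
  rw [qPochInf, ← hm.prod_mul_tprod_nat_mul', h2, qPoch]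

set_option maxHeartbeats 1000000 in
/-- the transform built from the continuous big q-Hermite polynomials H_n(x;c|q)
(defined by their generating function) satisfies T_{a,c} x^k = (ae^{iθ},ae^{-iθ};q)_k/(ac;q)_k. -/
theorem stmt8 (q a c : ℂ) (hq : ‖q‖ < 1) (ha : ‖a‖ < 1) (hc : ‖c‖ < 1)
    (H : ℕ → ℂ → ℂ)
    (hH : ∀ (t : ℂ) (θ : ℝ), ‖t‖ < 1 →
      HasSum (fun n : ℕ => H n (Real.cos θ : ℂ) * t ^ n / qPoch q q n)
        (qPochInf (c * t) q /
          (qPochInf (t * Complex.exp (θ * Complex.I)) q *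
            qPochInf (t * Complex.exp (-θ * Complex.I)) q)))
    (k : ℕ) (θ : ℝ) :
    qPochInf (a * Complex.exp (θ * Complex.I)) q * qPochInf (a * Complex.exp (-θ * Complex.I)) q /
        qPochInf (a * c) q *
        ∑' n : ℕ, (q ^ n) ^ k * a ^ n * H n (Real.cos θ : ℂ) / qPoch q q n =
      qPoch (a * Complex.exp (θ * Complex.I)) q k *
        qPoch (a * Complex.exp (-θ * Complex.I)) q k / qPoch (a * c) q k := by
  set x : ℂ := (Real.cos θ : ℂ)
  have hexp1 : ‖Complex.exp ((θ : ℂ) * Complex.I)‖ = 1 := by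
    simp [Complex.norm_exp]
  have hexp2 : ‖Complex.exp ((-θ : ℂ) * Complex.I)‖ = 1 := by
    simp [Complex.norm_exp]
  have hu : ‖a * Complex.exp ((θ : ℂ) * Complex.I)‖ < 1 := by
    rw [norm_mul, hexp1, mul_one]; exact ha
  have hv : ‖a * Complex.exp ((-θ : ℂ) * Complex.I)‖ < 1 := by
    rw [norm_mul, hexp2, mul_one]; exact ha
  have hw : ‖a * c‖ < 1 := by
    rw [norm_mul]
    nlinarith [norm_nonneg a, norm_nonneg c]
  have haq : ‖a * q ^ k‖ < 1 := lt_of_le_of_lt (norm_term_le a q hq k) ha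
  have hsum := hH (a * q ^ k) θ haq
  have hts : (∑' n : ℕ, (q ^ n) ^ k * a ^ n * H n x / qPoch q q n) =
      qPochInf ((a * c) * q ^ k) q /
        (qPochInf ((a * Complex.exp ((θ : ℂ) * Complex.I)) * q ^ k) q *
          qPochInf ((a * Complex.exp ((-θ : ℂ) * Complex.I)) * q ^ k) q) := by
    calc (∑' n : ℕ, (q ^ n) ^ k * a ^ n * H n x / qPoch q q n)
        = ∑' n : ℕ, H n x * (a * q ^ k) ^ n / qPoch q q n := tsum_congr fun n => by ring
      _ = qPochInf (c * (a * q ^ k)) q /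
            (qPochInf ((a * q ^ k) * Complex.exp ((θ : ℂ) * Complex.I)) q *
              qPochInf ((a * q ^ k) * Complex.exp ((-θ : ℂ) * Complex.I)) q) := hsum.tsum_eq
      _ = _ := by
            rw [show c * (a * q ^ k) = (a * c) * q ^ k from by ring,
              show (a * q ^ k) * Complex.exp ((θ : ℂ) * Complex.I)
                  = (a * Complex.exp ((θ : ℂ) * Complex.I)) * q ^ k from by ring,
              show (a * q ^ k) * Complex.exp ((-θ : ℂ) * Complex.I)
                  = (a * Complex.exp ((-θ : ℂ) * Complex.I)) * q ^ k from by ring]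
  have hsu := qPochInf_split (a * Complex.exp ((θ : ℂ) * Complex.I)) q hu hq k
  have hsv := qPochInf_split (a * Complex.exp ((-θ : ℂ) * Complex.I)) q hv hq k
  have hsw := qPochInf_split (a * c) q hw hq k
  have hnu : qPochInf ((a * Complex.exp ((θ : ℂ) * Complex.I)) * q ^ k) q ≠ 0 :=
    qPochInf_ne_zero _ q (lt_of_le_of_lt (norm_term_le _ q hq k) hu) hq
  have hnv : qPochInf ((a * Complex.exp ((-θ : ℂ) * Complex.I)) * q ^ k) q ≠ 0 :=
    qPochInf_ne_zero _ q (lt_of_le_of_lt (norm_term_le _ q hq k) hv) hq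
  have hnw : qPochInf ((a * c) * q ^ k) q ≠ 0 :=
    qPochInf_ne_zero _ q (lt_of_le_of_lt (norm_term_le _ q hq k) hw) hq
  have hnpw : qPoch (a * c) q k ≠ 0 := by
    rw [qPoch]
    exact Finset.prod_ne_zero_iff.2 fun j _ => one_sub_ne (a * c) q hw hq j
  rw [hts, hsu, hsv, hsw]
  set Pu := qPoch (a * Complex.exp ((θ : ℂ) * Complex.I)) q k
  set Pv := qPoch (a * Complex.exp ((-θ : ℂ) * Complex.I)) q k
  set Pw := qPoch (a * c) q k
  set Gu := qPochInf ((a * Complex.exp ((θ : ℂ) * Complex.I)) * q ^ k) q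
  set Gv := qPochInf ((a * Complex.exp ((-θ : ℂ) * Complex.I)) * q ^ k) q
  set Gw := qPochInf ((a * c) * q ^ k) q
  field_simp
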